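/- Let c > 1/2 and δ > 0 be fixed. Let ℓ ≥ 4 and let ℓ_1, ℓ_2, ℓ_3, ℓ_4 be positive integers with ℓ_1+ℓ_2+ℓ_3+ℓ_4 = ℓ. Then there exist constants C > 0 and ρ ∈ (0,1), depending only on ℓ, c and δ, such that for all n ≥ 1: V_n^{−2ℓc} ∫_{ℝ^n}∫_{ℝ^n} g_n(x_1)^{ℓ_1} · g_n(x_2)^{ℓ_2} · g_n(x_1+x_2)^{ℓ_3} · g_n(x_1−x_2)^{ℓ_4} dx_1 dx_2 ≤ C·ρ^n, where g_n(x) = ( |x|^n + R_n(δ)^n )^{−2c}. -/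

import Mathlib

open MeasureTheory

/-- `V_n = π^{n/2} / Γ(n/2 + 1)`, the volume of the unit ball in `ℝⁿ`. -/
noncomputable def unitBallVol (n : ℕ) : ℝ :=
  Real.pi ^ ((n : ℝ) / 2) / Real.Gamma ((n : ℝ) / 2 + 1)

/-- `R_n(δ) = (δ / V_n)^{1/n}`, the radius of a ball of volume `δ` in `ℝⁿ`. -/
noncomputable def cutRadius (n : ℕ) (δ : ℝ) : ℝ :=
  (δ / unitBallVol n) ^ (1 / (n : ℝ))

/-- `g_n(x) = (|x|^n + R_n(δ)^n)^{-2c}`, the spherical symmetrization of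
`|x|^{-2cn}·1_{|x|>R_n(δ)}`. -/
noncomputable def symTruncPower (n : ℕ) (c δ : ℝ) (x : EuclideanSpace ℝ (Fin n)) : ℝ :=
  (‖x‖ ^ n + cutRadius n δ ^ n) ^ (-(2 * c))

/-! With `ρ = R_n(δ)^n = δ / V_n` and `w(s) = (s + ρ)^{-2c}` we have `g_n(x) = w(|x|^n)` and
`w ≤ ρ^{-2c}`, so all but one power of each of the four factors can be discarded. By the
parallelogram law the larger of `|x₁ + x₂|`, `|x₁ - x₂|` has square at least `2|x₁||x₂|`, and
`w(s) ≤ ρ^{1/2-2c} s^{-1/2}` turns its factor into `2^{-n/4} (|x₁|^n |x₂|^n)^{-1/4}`. The double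
integral is thus bounded by the square of `∫ |x|^{-n/4} w(|x|^n) dx`, which the substitution
`s = |x|^n` in polar coordinates turns into `V_n ρ^{3/4-2c} J(c)` with
`J(c) = ∫_0^∞ s^{-1/4} (1 + s)^{-2c} ds`. All powers of `V_n` cancel against the normalization,
leaving `δ^{2-2ℓc} J(c)^2 2^{-n/4}`. -/

open Set Real Metric Module

section RadialPower

variable {F : Type*} [NormedAddCommGroup F] [NormedSpace ℝ F] {d : ℕ}

lemma rpow_natCast_sub_one_smul_comp_rpow (g : ℝ → F) (hd : d ≠ 0) (r : ℝ) :
    r ^ ((d : ℝ) - 1) • g (r ^ (d : ℝ)) = r ^ (d - 1) • g (r ^ d) := by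
  rw [← Nat.cast_one, ← Nat.cast_sub (Nat.one_le_iff_ne_zero.mpr hd), rpow_natCast, rpow_natCast]

lemma integrableOn_Ioi_pow_sub_one_smul_comp_pow_iff (g : ℝ → F) (hd : d ≠ 0) :
    IntegrableOn (fun r ↦ r ^ (d - 1) • g (r ^ d)) (Ioi 0) ↔ IntegrableOn g (Ioi 0) := by
  simpa only [rpow_natCast_sub_one_smul_comp_rpow g hd] using
    integrableOn_Ioi_comp_rpow_iff' g (Nat.cast_ne_zero.mpr hd)

lemma integral_Ioi_pow_sub_one_smul_comp_pow (g : ℝ → F) (hd : d ≠ 0) :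
    ∫ r in Ioi 0, r ^ (d - 1) • g (r ^ d) = (d : ℝ)⁻¹ • ∫ s in Ioi 0, g s := by
  have hd' : (0 : ℝ) < d := Nat.cast_pos.mpr (Nat.pos_of_ne_zero hd)
  rw [← integral_comp_rpow_Ioi_of_pos (g := g) hd']
  simp only [mul_smul, integral_smul, rpow_natCast_sub_one_smul_comp_rpow g hd]
  rw [smul_smul, inv_mul_cancel₀ hd'.ne', one_smul]

variable {E : Type*} [NormedAddCommGroup E] [InnerProductSpace ℝ E] [FiniteDimensional ℝ E]
  [MeasurableSpace E] [BorelSpace E] [Nontrivial E] (μ : Measure E) [μ.IsAddHaarMeasure]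

theorem integrable_comp_norm_pow_finrank_iff {g : ℝ → F} :
    Integrable (fun x : E ↦ g (‖x‖ ^ finrank ℝ E)) μ ↔ IntegrableOn g (Ioi 0) := by
  rw [integrable_fun_norm_addHaar μ (f := fun r ↦ g (r ^ finrank ℝ E)),
    integrableOn_Ioi_pow_sub_one_smul_comp_pow_iff g finrank_pos.ne']

theorem integral_comp_norm_pow_finrank (g : ℝ → F) :
    ∫ x, g (‖x‖ ^ finrank ℝ E) ∂μ = μ.real (ball 0 1) • ∫ s in Ioi 0, g s := by
  have hd : (finrank ℝ E : ℝ) ≠ 0 := Nat.cast_ne_zero.mpr finrank_pos.ne'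
  rw [integral_fun_norm_addHaar μ (fun r ↦ g (r ^ finrank ℝ E)),
    integral_Ioi_pow_sub_one_smul_comp_pow g finrank_pos.ne', ← Nat.cast_smul_eq_nsmul ℝ, smul_smul,
    smul_smul, mul_right_comm, mul_inv_cancel₀ hd, one_mul]

end RadialPower

theorem integral_integral_le_integral_mul_integral {α β : Type*} [MeasurableSpace α]
    [MeasurableSpace β] {μ : Measure α} {ν : Measure β} {F : α → β → ℝ} {f : α → ℝ} {g : β → ℝ}
    (hF : ∀ x y, 0 ≤ F x y) (hf : Integrable f μ) (hg : Integrable g ν)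
    (hle : ∀ᵐ x ∂μ, ∀ᵐ y ∂ν, F x y ≤ f x * g y) :
    ∫ x, ∫ y, F x y ∂ν ∂μ ≤ (∫ x, f x ∂μ) * ∫ y, g y ∂ν := by
  rw [← integral_mul_const]
  refine integral_mono_of_nonneg (.of_forall fun x ↦ integral_nonneg (hF x)) (hf.mul_const _) ?_
  filter_upwards [hle] with x hx
  rw [← integral_const_mul]
  exact integral_mono_of_nonneg (.of_forall (hF x)) (hg.const_mul _) hx

def fourFoldProduct {E : Type*} [Add E] [Sub E] (f : E → ℝ) (ℓ₁ ℓ₂ ℓ₃ ℓ₄ : ℕ) (x y : E) : ℝ :=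
  f x ^ ℓ₁ * f y ^ ℓ₂ * f (x + y) ^ ℓ₃ * f (x - y) ^ ℓ₄

lemma fourFoldProduct_nonneg {E : Type*} [Add E] [Sub E] {f : E → ℝ} (hf : ∀ x, 0 ≤ f x)
    (ℓ₁ ℓ₂ ℓ₃ ℓ₄ : ℕ) (x y : E) : 0 ≤ fourFoldProduct f ℓ₁ ℓ₂ ℓ₃ ℓ₄ x y := by
  have := hf x; have := hf y; have := hf (x + y); have := hf (x - y)
  unfold fourFoldProduct
  positivity

lemma pow_le_pow_pred_mul {a q : ℝ} (ha : 0 ≤ a) (haq : a ≤ q) {k : ℕ} (hk : k ≠ 0) :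
    a ^ k ≤ q ^ (k - 1) * a := by
  obtain ⟨j, rfl⟩ := Nat.exists_eq_succ_of_ne_zero hk
  rw [pow_succ, Nat.succ_sub_one]
  exact mul_le_mul_of_nonneg_right (pow_le_pow_left₀ ha haq j) ha

lemma fourFoldProduct_le {E : Type*} [Add E] [Sub E] {f : E → ℝ} {q : ℝ} (hf₀ : ∀ x, 0 ≤ f x)
    (hfq : ∀ x, f x ≤ q) {ℓ₁ ℓ₂ ℓ₃ ℓ₄ : ℕ} (h₁ : ℓ₁ ≠ 0) (h₂ : ℓ₂ ≠ 0) (h₃ : ℓ₃ ≠ 0)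
    (h₄ : ℓ₄ ≠ 0) (x y : E) :
    fourFoldProduct f ℓ₁ ℓ₂ ℓ₃ ℓ₄ x y ≤
      q ^ (ℓ₁ + ℓ₂ + ℓ₃ + ℓ₄ - 4) * fourFoldProduct f 1 1 1 1 x y := by
  have hq : q ^ (ℓ₁ - 1) * q ^ (ℓ₂ - 1) * q ^ (ℓ₃ - 1) * q ^ (ℓ₄ - 1) =
      q ^ (ℓ₁ + ℓ₂ + ℓ₃ + ℓ₄ - 4) := by
    rw [← pow_add, ← pow_add, ← pow_add]
    congr 1
    omega
  have := hf₀ x; have := hf₀ y; have := hf₀ (x + y); have := hf₀ (x - y)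
  have : 0 ≤ q := (hf₀ x).trans (hfq x)
  calc fourFoldProduct f ℓ₁ ℓ₂ ℓ₃ ℓ₄ x y
      ≤ q ^ (ℓ₁ - 1) * f x * (q ^ (ℓ₂ - 1) * f y) * (q ^ (ℓ₃ - 1) * f (x + y)) *
          (q ^ (ℓ₄ - 1) * f (x - y)) := by
        unfold fourFoldProduct
        gcongr ?_ * ?_ * ?_ * ?_ <;> exact pow_le_pow_pred_mul ‹_› (hfq _) ‹_›
    _ = _ := by
        rw [← hq]
        unfold fourFoldProduct
        ring

lemma unitBallVol_pos (n : ℕ) : 0 < unitBallVol n :=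
  div_pos (rpow_pos_of_pos pi_pos _) (Gamma_pos_of_pos (by positivity))

lemma volume_real_unitBall {n : ℕ} (hn : n ≠ 0) :
    (volume : Measure (EuclideanSpace ℝ (Fin n))).real (ball 0 1) = unitBallVol n := by
  have : Nonempty (Fin n) := ⟨⟨0, Nat.pos_of_ne_zero hn⟩⟩
  rw [measureReal_def, EuclideanSpace.volume_ball, Fintype.card_fin, ENNReal.ofReal_one, one_pow,
    one_mul, ENNReal.toReal_ofReal (by positivity), unitBallVol, sqrt_eq_rpow, ← rpow_natCast,
    ← rpow_mul pi_pos.le]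
  ring_nf

lemma cutRadius_pow {n : ℕ} (hn : n ≠ 0) {δ : ℝ} (hδ : 0 ≤ δ) :
    cutRadius n δ ^ n = δ / unitBallVol n := by
  rw [cutRadius, one_div, rpow_inv_natCast_pow (div_nonneg hδ (unitBallVol_pos n).le) hn]

namespace SymmetrizedIntegral

noncomputable def weight (ρ c s : ℝ) : ℝ := (s + ρ) ^ (-(2 * c))

noncomputable def profile (ρ c s : ℝ) : ℝ := s ^ (-(1 / 4 : ℝ)) * weight ρ c s

noncomputable def profileIntegral (c : ℝ) : ℝ := ∫ s in Ioi 0, profile 1 c s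

variable {ρ c s : ℝ}

lemma weight_nonneg (hρ : 0 ≤ ρ) (hs : 0 ≤ s) : 0 ≤ weight ρ c s :=
  rpow_nonneg (add_nonneg hs hρ) _

lemma profile_nonneg (hρ : 0 ≤ ρ) (hs : 0 ≤ s) : 0 ≤ profile ρ c s :=
  mul_nonneg (rpow_nonneg hs _) (weight_nonneg hρ hs)

lemma weight_le (hρ : 0 < ρ) (hc : 0 ≤ c) (hs : 0 ≤ s) : weight ρ c s ≤ ρ ^ (-(2 * c)) :=
  rpow_le_rpow_of_nonpos hρ (le_add_of_nonneg_left hs) (by linarith)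

lemma weight_le_mul_rpow (hρ : 0 < ρ) (hc : 1 / 4 ≤ c) (hs : 0 < s) :
    weight ρ c s ≤ ρ ^ (1 / 2 - 2 * c) * s ^ (-(1 / 2 : ℝ)) := by
  have hsρ : 0 < s + ρ := add_pos hs hρ
  rw [weight, show -(2 * c) = (1 / 2 - 2 * c) + -(1 / 2) by ring, rpow_add hsρ]
  exact mul_le_mul (rpow_le_rpow_of_nonpos hρ (le_add_of_nonneg_left hs.le) (by linarith))
    (rpow_le_rpow_of_nonpos hs (le_add_of_nonneg_right hρ.le) (by norm_num))
    (rpow_nonneg hsρ.le _) (rpow_nonneg hρ.le _)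

lemma rpow_neg_half_pow_le {a b M : ℝ} (ha : 0 < a) (hb : 0 < b) (hM₀ : 0 ≤ M)
    (hM : 2 * (a * b) ≤ M ^ 2) (d : ℕ) :
    (M ^ d) ^ (-(1 / 2 : ℝ)) ≤
      (2 ^ (-(1 / 4 : ℝ))) ^ d * ((a ^ d) ^ (-(1 / 4 : ℝ)) * (b ^ d) ^ (-(1 / 4 : ℝ))) := by
  have h2ab : 0 < 2 * (a * b) := by positivity
  calc (M ^ d) ^ (-(1 / 2 : ℝ)) = ((M ^ 2) ^ d) ^ (-(1 / 4 : ℝ)) := by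
        rw [← pow_mul, mul_comm, pow_mul, ← rpow_natCast_mul (pow_nonneg hM₀ d)]
        norm_num
    _ ≤ ((2 * (a * b)) ^ d) ^ (-(1 / 4 : ℝ)) :=
        rpow_le_rpow_of_nonpos (by positivity) (pow_le_pow_left₀ h2ab.le hM d) (by norm_num)
    _ = _ := by
        rw [mul_pow, mul_pow, mul_rpow (by positivity) (by positivity),
          mul_rpow (by positivity) (by positivity), rpow_pow_comm zero_le_two]

lemma profile_mul_left (hρ : 0 < ρ) {t : ℝ} (ht : 0 ≤ t) :
    profile ρ c (ρ * t) = ρ ^ (-(1 / 4 : ℝ) - 2 * c) * profile 1 c t := by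
  rw [profile, profile, weight, weight, show ρ * t + ρ = ρ * (t + 1) by ring,
    mul_rpow hρ.le ht, mul_rpow hρ.le (by positivity), sub_eq_add_neg, rpow_add hρ]
  ring

lemma integrableOn_profile_one (hc : 3 / 8 < c) : IntegrableOn (profile 1 c) (Ioi 0) := by
  have hmeas : AEStronglyMeasurable (profile 1 c) := by
    unfold profile weight; fun_prop
  rw [← Ioc_union_Ioi_eq_Ioi zero_le_one]
  refine IntegrableOn.union ?_ ?_
  · refine ((intervalIntegrable_iff_integrableOn_Ioc_of_le zero_le_one).mp
      (intervalIntegral.intervalIntegrable_rpow' (r := -(1 / 4)) (by norm_num))).mono'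
      hmeas.restrict ?_
    filter_upwards [ae_restrict_mem measurableSet_Ioc] with t ⟨ht₀, _⟩
    rw [norm_of_nonneg (profile_nonneg zero_le_one ht₀.le), profile]
    exact mul_le_of_le_one_right (by positivity)
      (rpow_le_one_of_one_le_of_nonpos (by linarith) (by linarith))
  · refine (integrableOn_Ioi_rpow_of_lt (a := -(1 / 4) + -(2 * c)) (by linarith) zero_lt_one).mono'
      hmeas.restrict ?_
    filter_upwards [ae_restrict_mem measurableSet_Ioi] with t (ht : 1 < t)
    rw [norm_of_nonneg (profile_nonneg zero_le_one (by linarith)), profile, weight,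
      rpow_add (by linarith)]
    exact mul_le_mul_of_nonneg_left
      (rpow_le_rpow_of_nonpos (by linarith) (by linarith) (by linarith)) (by positivity)

lemma integrableOn_profile (hρ : 0 < ρ) (hc : 3 / 8 < c) : IntegrableOn (profile ρ c) (Ioi 0) := by
  rw [← mul_zero ρ, ← integrableOn_Ioi_comp_mul_left_iff _ _ hρ]
  exact IntegrableOn.congr_fun ((integrableOn_profile_one hc).const_mul _)
    (fun t ht ↦ (profile_mul_left hρ (le_of_lt ht)).symm) measurableSet_Ioi

lemma integral_profile (hρ : 0 < ρ) :
    ∫ s in Ioi 0, profile ρ c s = ρ ^ (3 / 4 - 2 * c) * profileIntegral c := by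
  have h := integral_comp_mul_left_Ioi (profile ρ c) 0 hρ
  rw [mul_zero, setIntegral_congr_fun measurableSet_Ioi
    (fun t ht ↦ profile_mul_left hρ (le_of_lt ht)), integral_const_mul, smul_eq_mul,
    eq_inv_mul_iff_mul_eq₀ hρ.ne'] at h
  rw [← h, profileIntegral, ← mul_assoc, show (3 / 4 : ℝ) - 2 * c = 1 + (-(1 / 4) - 2 * c) by ring,
    rpow_add hρ, rpow_one]

lemma weight_mul_weight_le_of_two_mul_le_sq (hρ : 0 < ρ) (hc : 1 / 4 ≤ c) {a b u M : ℝ}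
    (ha : 0 < a) (hb : 0 < b) (hu : 0 ≤ u) (hM₀ : 0 ≤ M) (hM : 2 * (a * b) ≤ M ^ 2) (d : ℕ) :
    weight ρ c (u ^ d) * weight ρ c (M ^ d) ≤ ρ ^ (-(2 * c)) * ρ ^ (1 / 2 - 2 * c) *
      (2 ^ (-(1 / 4 : ℝ))) ^ d * ((a ^ d) ^ (-(1 / 4 : ℝ)) * (b ^ d) ^ (-(1 / 4 : ℝ))) := by
  have hMpos : 0 < M := by nlinarith [mul_pos ha hb]
  calc weight ρ c (u ^ d) * weight ρ c (M ^ d)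
      ≤ ρ ^ (-(2 * c)) * (ρ ^ (1 / 2 - 2 * c) * (M ^ d) ^ (-(1 / 2 : ℝ))) :=
        mul_le_mul (weight_le hρ (by linarith) (by positivity))
          (weight_le_mul_rpow hρ hc (by positivity)) (weight_nonneg hρ.le (by positivity))
          (by positivity)
    _ ≤ ρ ^ (-(2 * c)) * (ρ ^ (1 / 2 - 2 * c) * ((2 ^ (-(1 / 4 : ℝ))) ^ d *
          ((a ^ d) ^ (-(1 / 4 : ℝ)) * (b ^ d) ^ (-(1 / 4 : ℝ))))) := by
        gcongr
        exact rpow_neg_half_pow_le ha hb hM₀ hM d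
    _ = _ := by ring

section InnerProductSpace

variable {E : Type*} [NormedAddCommGroup E] [InnerProductSpace ℝ E]

lemma two_mul_norm_mul_norm_le_norm_sub_sq {x y : E} (h : ‖x + y‖ ≤ ‖x - y‖) :
    2 * (‖x‖ * ‖y‖) ≤ ‖x - y‖ ^ 2 := by
  have := parallelogram_law_with_norm ℝ x y
  nlinarith [sq_nonneg (‖x‖ - ‖y‖), norm_nonneg (x + y)]

lemma weight_norm_add_mul_weight_norm_sub_le (hρ : 0 < ρ) (hc : 1 / 4 ≤ c) {x y : E}
    (hx : x ≠ 0) (hy : y ≠ 0) (d : ℕ) :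
    weight ρ c (‖x + y‖ ^ d) * weight ρ c (‖x - y‖ ^ d) ≤ ρ ^ (-(2 * c)) * ρ ^ (1 / 2 - 2 * c) *
      (2 ^ (-(1 / 4 : ℝ))) ^ d * ((‖x‖ ^ d) ^ (-(1 / 4 : ℝ)) * (‖y‖ ^ d) ^ (-(1 / 4 : ℝ))) := by
  have ha := norm_pos_iff.mpr hx
  have hb := norm_pos_iff.mpr hy
  rcases le_total ‖x + y‖ ‖x - y‖ with h | h
  · exact weight_mul_weight_le_of_two_mul_le_sq hρ hc ha hb (norm_nonneg _) (norm_nonneg _)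
      (two_mul_norm_mul_norm_le_norm_sub_sq h) d
  · have h' : ‖x + -y‖ ≤ ‖x - -y‖ := by simpa [← sub_eq_add_neg] using h
    have := two_mul_norm_mul_norm_le_norm_sub_sq h'
    rw [norm_neg, sub_neg_eq_add] at this
    rw [mul_comm]
    exact weight_mul_weight_le_of_two_mul_le_sq hρ hc ha hb (norm_nonneg _) (norm_nonneg _) this d

lemma fourFoldProduct_weight_le (hρ : 0 < ρ) (hc : 1 / 4 ≤ c) {x y : E} (hx : x ≠ 0)
    (hy : y ≠ 0) {ℓ₁ ℓ₂ ℓ₃ ℓ₄ : ℕ} (h₁ : ℓ₁ ≠ 0) (h₂ : ℓ₂ ≠ 0) (h₃ : ℓ₃ ≠ 0) (h₄ : ℓ₄ ≠ 0)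
    (d : ℕ) :
    fourFoldProduct (fun z : E ↦ weight ρ c (‖z‖ ^ d)) ℓ₁ ℓ₂ ℓ₃ ℓ₄ x y ≤
      (ρ ^ (-(2 * c))) ^ (ℓ₁ + ℓ₂ + ℓ₃ + ℓ₄ - 3) * ρ ^ (1 / 2 - 2 * c) *
        (2 ^ (-(1 / 4 : ℝ))) ^ d * profile ρ c (‖x‖ ^ d) * profile ρ c (‖y‖ ^ d) := by
  have hw : ∀ z : E, 0 ≤ weight ρ c (‖z‖ ^ d) := fun z ↦ weight_nonneg hρ.le (by positivity)
  have := hw x; have := hw y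
  calc _ ≤ (ρ ^ (-(2 * c))) ^ (ℓ₁ + ℓ₂ + ℓ₃ + ℓ₄ - 4) *
        fourFoldProduct (fun z : E ↦ weight ρ c (‖z‖ ^ d)) 1 1 1 1 x y :=
        fourFoldProduct_le hw (fun z ↦ weight_le hρ (by linarith) (by positivity)) h₁ h₂ h₃ h₄ x y
    _ ≤ (ρ ^ (-(2 * c))) ^ (ℓ₁ + ℓ₂ + ℓ₃ + ℓ₄ - 4) *
        (weight ρ c (‖x‖ ^ d) * weight ρ c (‖y‖ ^ d) *
          (ρ ^ (-(2 * c)) * ρ ^ (1 / 2 - 2 * c) * (2 ^ (-(1 / 4 : ℝ))) ^ d *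
            ((‖x‖ ^ d) ^ (-(1 / 4 : ℝ)) * (‖y‖ ^ d) ^ (-(1 / 4 : ℝ))))) := by
        unfold fourFoldProduct
        simp only [pow_one, mul_assoc (weight ρ c (‖x‖ ^ d) * weight ρ c (‖y‖ ^ d))]
        gcongr _ * (_ * ?_)
        exact weight_norm_add_mul_weight_norm_sub_le hρ hc hx hy d
    _ = _ := by
        rw [profile, profile, show ℓ₁ + ℓ₂ + ℓ₃ + ℓ₄ - 3 = ℓ₁ + ℓ₂ + ℓ₃ + ℓ₄ - 4 + 1 by omega,
          pow_succ]
        ring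

end InnerProductSpace

theorem integral_integral_fourFoldProduct_weight_le {E : Type*} [NormedAddCommGroup E]
    [InnerProductSpace ℝ E] [FiniteDimensional ℝ E] [MeasurableSpace E] [BorelSpace E]
    [Nontrivial E] (μ : Measure E) [μ.IsAddHaarMeasure] (hρ : 0 < ρ) (hc : 3 / 8 < c)
    {ℓ₁ ℓ₂ ℓ₃ ℓ₄ : ℕ} (h₁ : ℓ₁ ≠ 0) (h₂ : ℓ₂ ≠ 0) (h₃ : ℓ₃ ≠ 0) (h₄ : ℓ₄ ≠ 0) :
    ∫ x, ∫ y, fourFoldProduct (fun z : E ↦ weight ρ c (‖z‖ ^ finrank ℝ E)) ℓ₁ ℓ₂ ℓ₃ ℓ₄ x y ∂μ ∂μ ≤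
      μ.real (ball 0 1) ^ 2 * ρ ^ (2 - 2 * c * (ℓ₁ + ℓ₂ + ℓ₃ + ℓ₄ : ℕ)) *
        profileIntegral c ^ 2 * (2 ^ (-(1 / 4 : ℝ))) ^ finrank ℝ E := by
  set d := finrank ℝ E
  set K := (ρ ^ (-(2 * c))) ^ (ℓ₁ + ℓ₂ + ℓ₃ + ℓ₄ - 3) * ρ ^ (1 / 2 - 2 * c) *
    (2 ^ (-(1 / 4 : ℝ))) ^ d
  have hint : Integrable (fun x : E ↦ profile ρ c (‖x‖ ^ d)) μ :=
    (integrable_comp_norm_pow_finrank_iff μ).mpr (integrableOn_profile hρ hc)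
  have hval : ∫ x, profile ρ c (‖x‖ ^ d) ∂μ =
      μ.real (ball 0 1) * (ρ ^ (3 / 4 - 2 * c) * profileIntegral c) := by
    rw [integral_comp_norm_pow_finrank, integral_profile hρ, smul_eq_mul]
  have hne : ∀ᵐ x ∂μ, x ≠ 0 := compl_mem_ae_iff.mpr (measure_singleton 0)
  have hexp : (ρ ^ (-(2 * c))) ^ (ℓ₁ + ℓ₂ + ℓ₃ + ℓ₄ - 3) * ρ ^ (1 / 2 - 2 * c) *
      ρ ^ (3 / 4 - 2 * c) * ρ ^ (3 / 4 - 2 * c) = ρ ^ (2 - 2 * c * (ℓ₁ + ℓ₂ + ℓ₃ + ℓ₄ : ℕ)) := by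
    rw [← rpow_mul_natCast hρ.le, Nat.cast_sub (by omega), ← rpow_add hρ, ← rpow_add hρ,
      ← rpow_add hρ]
    push_cast
    ring_nf
  calc _ ≤ (∫ x, K * profile ρ c (‖x‖ ^ d) ∂μ) * ∫ y, profile ρ c (‖y‖ ^ d) ∂μ := by
        refine integral_integral_le_integral_mul_integral
          (fourFoldProduct_nonneg (fun z ↦ weight_nonneg hρ.le (by positivity)) _ _ _ _)
          (hint.const_mul K) hint ?_
        filter_upwards [hne] with x hx
        filter_upwards [hne] with y hy
        exact fourFoldProduct_weight_le hρ (by linarith) hx hy h₁ h₂ h₃ h₄ d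
    _ = _ := by
        rw [integral_const_mul, hval, ← hexp]
        ring

lemma symTruncPower_eq_weight {n : ℕ} (hn : n ≠ 0) (c : ℝ) {δ : ℝ} (hδ : 0 ≤ δ) :
    symTruncPower n c δ = fun x ↦ weight (δ / unitBallVol n) c (‖x‖ ^ n) := by
  ext x
  rw [symTruncPower, weight, cutRadius_pow hn hδ]

end SymmetrizedIntegral

open SymmetrizedIntegral in
theorem symmetrized_four_fold_integral_bound_general
    (c δ : ℝ) (hc : 1 / 2 < c) (hδ : 0 < δ)
    (ℓ ℓ₁ ℓ₂ ℓ₃ ℓ₄ : ℕ)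
    (h₁ : 0 < ℓ₁) (h₂ : 0 < ℓ₂) (h₃ : 0 < ℓ₃) (h₄ : 0 < ℓ₄)
    (hsum : ℓ₁ + ℓ₂ + ℓ₃ + ℓ₄ = ℓ) :
    ∃ C ρ : ℝ, 0 < C ∧ ρ ∈ Set.Ioo (0 : ℝ) 1 ∧
      ∀ n : ℕ, 1 ≤ n →
        unitBallVol n ^ (-(2 * (ℓ : ℝ) * c)) *
          ∫ x₁ : EuclideanSpace ℝ (Fin n), ∫ x₂ : EuclideanSpace ℝ (Fin n),
            symTruncPower n c δ x₁ ^ ℓ₁ * symTruncPower n c δ x₂ ^ ℓ₂ *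
              symTruncPower n c δ (x₁ + x₂) ^ ℓ₃ * symTruncPower n c δ (x₁ - x₂) ^ ℓ₄
        ≤ C * ρ ^ n := by
  set J := profileIntegral c
  refine ⟨(J ^ 2 + 1) * δ ^ (2 - 2 * c * ℓ), 2 ^ (-(1 / 4 : ℝ)), by positivity,
    ⟨by positivity, rpow_lt_one_of_one_lt_of_neg one_lt_two (by norm_num)⟩, fun n hn ↦ ?_⟩
  have hn₀ : n ≠ 0 := by omega
  have hV := unitBallVol_pos n
  have : Nontrivial (EuclideanSpace ℝ (Fin n)) := nontrivial_of_finrank_pos (R := ℝ) (by simpa)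
  have hbound := integral_integral_fourFoldProduct_weight_le
    (volume : Measure (EuclideanSpace ℝ (Fin n))) (div_pos hδ hV) (by linarith : 3 / 8 < c)
    h₁.ne' h₂.ne' h₃.ne' h₄.ne'
  rw [finrank_euclideanSpace_fin, volume_real_unitBall hn₀, hsum,
    ← symTruncPower_eq_weight hn₀ c hδ.le] at hbound
  have hVexp : unitBallVol n ^ (-(2 * (ℓ : ℝ) * c)) * unitBallVol n ^ 2 =
      unitBallVol n ^ (2 - 2 * c * ℓ) := by
    rw [← rpow_natCast, ← rpow_add hV]
    ring_nf
  calc _ ≤ unitBallVol n ^ (-(2 * (ℓ : ℝ) * c)) * (unitBallVol n ^ 2 *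
          (δ / unitBallVol n) ^ (2 - 2 * c * ℓ) * J ^ 2 * (2 ^ (-(1 / 4 : ℝ))) ^ n) :=
        mul_le_mul_of_nonneg_left hbound (by positivity)
    _ = J ^ 2 * δ ^ (2 - 2 * c * ℓ) * (2 ^ (-(1 / 4 : ℝ))) ^ n := by
        rw [div_rpow hδ.le hV.le, ← mul_assoc, ← mul_assoc, ← mul_assoc, hVexp]
        field_simp
    _ ≤ _ := by gcongr; linarith

/-- for positive integers `ℓ_1 + ℓ_2 + ℓ_3 + ℓ_4 = ℓ ≥ 4`, the normalized
double integral of `g_n(x₁)^{ℓ₁} g_n(x₂)^{ℓ₂} g_n(x₁+x₂)^{ℓ₃} g_n(x₁-x₂)^{ℓ₄}` decays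
exponentially in `n`. -/
theorem symmetrized_four_fold_integral_bound
    (c δ : ℝ) (hc : 1 / 2 < c) (hδ : 0 < δ)
    (ℓ ℓ₁ ℓ₂ ℓ₃ ℓ₄ : ℕ) (hℓ : 4 ≤ ℓ)
    (h₁ : 0 < ℓ₁) (h₂ : 0 < ℓ₂) (h₃ : 0 < ℓ₃) (h₄ : 0 < ℓ₄)
    (hsum : ℓ₁ + ℓ₂ + ℓ₃ + ℓ₄ = ℓ) :
    ∃ C ρ : ℝ, 0 < C ∧ ρ ∈ Set.Ioo (0 : ℝ) 1 ∧
      ∀ n : ℕ, 1 ≤ n →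
        unitBallVol n ^ (-(2 * (ℓ : ℝ) * c)) *
          ∫ x₁ : EuclideanSpace ℝ (Fin n), ∫ x₂ : EuclideanSpace ℝ (Fin n),
            symTruncPower n c δ x₁ ^ ℓ₁ * symTruncPower n c δ x₂ ^ ℓ₂ *
              symTruncPower n c δ (x₁ + x₂) ^ ℓ₃ * symTruncPower n c δ (x₁ - x₂) ^ ℓ₄
        ≤ C * ρ ^ n :=
  symmetrized_four_fold_integral_bound_general c δ hc hδ ℓ ℓ₁ ℓ₂ ℓ₃ ℓ₄ h₁ h₂ h₃ h₄ hsum
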